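/- arXiv:2508.06680 — 4 statements merged into one kernel-verified Lean document; each statement's English description precedes it below -/
import Mathlib

section
/- Let p > 3 be a prime and F a field of characteristic p. Let a₄, a₆, x, y ∈ F with x ≠ 0, y ≠ 0 and y² = x³ + a₄·x + a₆. Let A, M, L be the Hasse invariant decomposition data of (X³ + a₄X + a₆)^((p−1)/2), evaluated at a₄, a₆ (and at x for M, L), and set ℘_A(z) = z^p − A·z. Then y·M(x) − ℘_A((3x² + 2a₄)/(3y)) = ℘_A((a₄·x + 3a₆)/(3xy)) − y·L(x)/x^p. -/
/-!
On the curve, `y ^ (p - 1) = (x³ + a₄x + a₆) ^ ((p - 1) / 2)`, so evaluating the decomposition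
`X^p·M + A·X^(p-1) + L` at `x` and multiplying by `y / x^p` gives `℘_A(y/x) = y·M(x) + y·L(x)/x^p`.
The two arguments of `℘_A` in the statement add up to `y / x`, and `℘_A` is additive in
characteristic `p`, being Frobenius minus a scalar.
-/

open Polynomial

def twistedArtinSchreier {R : Type*} [CommRing R] (p : ℕ) (A z : R) : R := z ^ p - A * z

theorem twistedArtinSchreier_add {R : Type*} [CommRing R] (p : ℕ) [Fact p.Prime] [CharP R p]
    (A u v : R) :
    twistedArtinSchreier p A (u + v) = twistedArtinSchreier p A u + twistedArtinSchreier p A v := by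
  simp only [twistedArtinSchreier, add_pow_char]
  ring

theorem twistedArtinSchreier_div_eq {F : Type*} [Field F] {n : ℕ} (hn : 1 ≤ n)
    {A x y m l : F} (hx : x ≠ 0) (h : y ^ (n - 1) = x ^ n * m + A * x ^ (n - 1) + l) :
    twistedArtinSchreier n A (y / x) = y * m + y * l / x ^ n := by
  have hy : y ^ n = y * y ^ (n - 1) := by rw [← pow_succ']; congr 1; omega
  have hx' : x ^ n = x * x ^ (n - 1) := by rw [← pow_succ']; congr 1; omega
  have hxn : x ^ (n - 1) ≠ 0 := pow_ne_zero _ hx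
  rw [twistedArtinSchreier, div_pow, hy, hx']
  rw [hx'] at h
  field_simp
  linear_combination y * h

theorem eval_eq_pow_mul_eval_divByMonic_add_eval_modByMonic {R : Type*} [CommRing R]
    (P : R[X]) (n : ℕ) (x : R) :
    P.eval x = x ^ n * (P /ₘ X ^ n).eval x + (P %ₘ X ^ n).eval x := by
  conv_lhs => rw [← modByMonic_add_div P (X ^ n)]
  simp only [eval_add, eval_mul, eval_pow, eval_X]
  ring

theorem pow_sub_one_eq_sq_pow_div_two {M : Type*} [Monoid M] {n : ℕ} (hn : Odd n) (y : M) :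
    y ^ (n - 1) = (y ^ 2) ^ ((n - 1) / 2) := by
  obtain ⟨k, rfl⟩ := hn
  rw [← pow_mul]
  congr 1
  omega

theorem div_add_div_eq_div_of_weierstrass {F : Type*} [Field F] (h3 : (3 : F) ≠ 0)
    {a₄ a₆ x y : F} (hx : x ≠ 0) (hy : y ≠ 0) (hcurve : y ^ 2 = x ^ 3 + a₄ * x + a₆) :
    (3 * x ^ 2 + 2 * a₄) / (3 * y) + (a₄ * x + 3 * a₆) / (3 * x * y) = y / x := by
  field_simp
  linear_combination (-3) * hcurve

theorem three_ne_zero_of_charP {R : Type*} [AddMonoidWithOne R] {p : ℕ} [CharP R p]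
    (hp3 : 3 < p) : (3 : R) ≠ 0 := by
  have h : ¬ p ∣ 3 := fun h => absurd (Nat.le_of_dvd three_pos h) (by omega)
  exact_mod_cast (CharP.cast_eq_zero_iff R p 3).not.mpr h

/-- Let `p > 3` be a prime and `F` a field of characteristic `p`.
Let `a₄, a₆, x, y ∈ F` with `x ≠ 0`, `y ≠ 0` and `y² = x³ + a₄·x + a₆`.
Let `A`, `M`, `L` be the Hasse invariant decomposition data of
`(X³ + a₄X + a₆)^((p−1)/2)` (so `A` is the coefficient of `X^(p−1)`, `M` is the quotient and
`A·X^(p−1) + L` the remainder upon division by `X^p`), evaluated at `a₄, a₆` (and at `x` for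
`M`, `L`), and set `℘_A(z) = z^p − A·z`.  Then
`y·M(x) − ℘_A((3x² + 2a₄)/(3y)) = ℘_A((a₄·x + 3a₆)/(3xy)) − y·L(x)/x^p`. -/
theorem stmt_3 (p : ℕ) (hp : p.Prime) (hp3 : 3 < p)
    (F : Type*) [Field F] [CharP F p]
    (a₄ a₆ x y : F) (hx : x ≠ 0) (hy : y ≠ 0)
    (hcurve : y ^ 2 = x ^ 3 + a₄ * x + a₆) :
    let P : Polynomial F :=
      (Polynomial.X ^ 3 + Polynomial.C a₄ * Polynomial.X + Polynomial.C a₆) ^ ((p - 1) / 2)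
    let A : F := P.coeff (p - 1)
    let M : Polynomial F := Polynomial.divByMonic P (Polynomial.X ^ p)
    let L : Polynomial F :=
      Polynomial.modByMonic P (Polynomial.X ^ p) - Polynomial.C A * Polynomial.X ^ (p - 1)
    let wA : F → F := fun z => z ^ p - A * z
    y * M.eval x - wA ((3 * x ^ 2 + 2 * a₄) / (3 * y))
      = wA ((a₄ * x + 3 * a₆) / (3 * x * y)) - y * L.eval x / x ^ p := by
  intro P A M L wA
  have : Fact p.Prime := ⟨hp⟩
  have hPx : P.eval x = (x ^ 3 + a₄ * x + a₆) ^ ((p - 1) / 2) := by simp [P]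
  have hL : (P %ₘ X ^ p).eval x = A * x ^ (p - 1) + L.eval x := by simp [L]
  have hP : y ^ (p - 1) = x ^ p * M.eval x + A * x ^ (p - 1) + L.eval x := by
    rw [pow_sub_one_eq_sq_pow_div_two (hp.odd_of_ne_two (by omega)), hcurve, ← hPx,
      eval_eq_pow_mul_eval_divByMonic_add_eval_modByMonic P p, hL, add_assoc]
  have hsum : wA (y / x) = wA ((3 * x ^ 2 + 2 * a₄) / (3 * y))
      + wA ((a₄ * x + 3 * a₆) / (3 * x * y)) := by
    rw [← div_add_div_eq_div_of_weierstrass (three_ne_zero_of_charP hp3) hx hy hcurve]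
    exact twistedArtinSchreier_add p A _ _
  have hdiv : wA (y / x) = y * M.eval x + y * L.eval x / x ^ p :=
    twistedArtinSchreier_div_eq hp.one_le hx hP
  -- otherwise `ring` unfolds `wA` and no longer sees the two hypotheses as linear in its values
  clear_value wA
  linear_combination hsum - hdiv
end

section
/- Let p > 3 be a prime and F a field of characteristic p equipped with a discrete valuation v : F → ℤ ∪ {∞}. Let a₄, a₆ ∈ F with v(a₄) ≥ 0 and v(a₆) ≥ 0, let ι ≥ 1 be an integer, and let x, y ∈ F satisfy y² = x³ + a₄·x + a₆ with v(x) = −2ι and v(y) = −3ι. With A, M as in the Hasse invariant decomposition of (X³ + a₄X + a₆)^((p−1)/2) evaluated at a₄, a₆, x, and ℘_A(z) = z^p − A·z, one has v( y·M(x) − ℘_A((3x² + 2a₄)/(3y)) ) ≥ ι. -/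
/-!
Write `t = (3x² + 2a₄)/(3y)` and `w = y/x²`, so `v(w) = ι`. On the curve, `y/x - t` equals
`u = (a₄x + 3a₆)/(3xy) = w·c` with `c` integral. Splitting `P = X^p·M + A·X^(p-1) + L` and using
`P(x) = (y²)^((p-1)/2) = y^(p-1)` gives `y·M(x) = ℘_A(y/x) - w·r` with `r = L(x)/x^(p-2)` integral,
because `deg L ≤ p - 2` and `x⁻¹` is integral. Since `℘_A` is additive in characteristic `p`,
`y·M(x) - ℘_A(t) = ℘_A(u) - w·r = w·(c·(u^(p-1) - A) - r)`, which has valuation at least `v(w) = ι`.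
-/

open Polynomial

namespace AddValuation

section Integer

variable {R Γ₀ : Type*} [Ring R] [LinearOrderedAddCommMonoidWithTop Γ₀] (v : AddValuation R Γ₀)

def integer : Subring R where
  carrier := {r | 0 ≤ v r}
  mul_mem' {a b} ha hb := by
    simp only [Set.mem_ofPred_eq, v.map_mul] at *
    exact add_nonneg ha hb
  one_mem' := by simp
  add_mem' {a b} ha hb := le_trans (le_min ha hb) (v.map_add a b)
  zero_mem' := by simp
  neg_mem' {a} ha := by simpa [v.map_neg] using ha

theorem mem_integer_iff {r : R} : r ∈ v.integer ↔ 0 ≤ v r := Iff.rfl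

theorem le_map_mul_of_mem_integer {c : Γ₀} {a b : R} (ha : c ≤ v a) (hb : b ∈ v.integer) :
    c ≤ v (a * b) := by
  rw [v.map_mul]
  simpa using add_le_add ha hb

end Integer

section Pole

variable {F : Type*} [Field F] (ν : AddValuation F (WithTop ℤ)) {x y : F} {ι : ℤ}
  (hx : ν x = ((-2 * ι : ℤ) : WithTop ℤ)) (hy : ν y = ((-3 * ι : ℤ) : WithTop ℤ))
include hx

theorem inv_mem_integer_of_map_eq (hι : 0 ≤ ι) : x⁻¹ ∈ ν.integer := by
  rw [mem_integer_iff, ν.map_inv, hx]; norm_cast; omega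

include hy

theorem map_div_sq_of_map_eq : ν (y / x ^ 2) = ι := by
  rw [ν.map_div, ν.map_pow, hx, hy]; norm_cast; simp; ring

theorem div_mem_integer_of_map_eq (hι : 0 ≤ ι) : x / y ∈ ν.integer := by
  rw [mem_integer_iff, ν.map_div, hx, hy]; norm_cast; omega

end Pole

end AddValuation

theorem map_one_eq_zero_of_map_mul {M : Type*} [MulOneClass M] {v : M → WithTop ℤ}
    (h1 : v 1 ≠ ⊤) (hmul : ∀ a b, v (a * b) = v a + v b) : v 1 = 0 := by
  have h := hmul 1 1
  rw [mul_one] at h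
  lift v 1 to ℤ using h1 with c
  norm_cast at h ⊢
  omega

theorem ZMod.cast_mem_subring {F : Type*} [Ring F] {p : ℕ} [CharP F p] (O : Subring F)
    (z : ZMod p) : (z.cast : F) ∈ O := by
  rw [← ZMod.intCast_cast]
  exact intCast_mem O _

theorem inv_natCast_mem_subring {F : Type*} [Field F] (p : ℕ) [Fact p.Prime] [CharP F p]
    (O : Subring F) (n : ℕ) : (n : F)⁻¹ ∈ O := by
  have h := map_inv₀ (ZMod.castHom (dvd_refl p) F) (n : ZMod p)
  rw [map_natCast, ZMod.castHom_apply] at h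
  exact h ▸ ZMod.cast_mem_subring O _

namespace Polynomial

section Ring

variable {R : Type*} [Ring R]

theorem mem_lifts_subtype_iff (O : Subring R) (f : R[X]) :
    f ∈ lifts O.subtype ↔ ∀ i, f.coeff i ∈ O := by
  simp [lifts_iff_coeff_lifts]

theorem coeff_pow_mem_subring (O : Subring R) {f : R[X]} (hf : ∀ i, f.coeff i ∈ O) (n i : ℕ) :
    (f ^ n).coeff i ∈ O :=
  (mem_lifts_subtype_iff O _).1 (pow_mem ((mem_lifts_subtype_iff O f).2 hf) n) i

theorem coeff_X_pow_three_add_C_mul_X_add_C_mem (O : Subring R) {a b : R} (ha : a ∈ O)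
    (hb : b ∈ O) (i : ℕ) : (X ^ 3 + C a * X + C b).coeff i ∈ O :=
  (mem_lifts_subtype_iff O _).1 (add_mem (add_mem (X_pow_mem_lifts _ 3)
    (mul_mem (C_mem_lifts O.subtype ⟨a, ha⟩) (X_mem_lifts _))) (C_mem_lifts O.subtype ⟨b, hb⟩)) i

theorem coeff_modByMonic_X_pow (f : R[X]) (n i : ℕ) :
    (f %ₘ X ^ n).coeff i = if i < n then f.coeff i else 0 := by
  split_ifs with h
  · have := congrArg (coeff · i) (modByMonic_add_div f (X ^ n))
    simp only [coeff_add] at this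
    rwa [coeff_X_pow_mul', if_neg (by omega), add_zero] at this
  · nontriviality R
    refine coeff_eq_zero_of_degree_lt (lt_of_lt_of_le (degree_modByMonic_lt f (monic_X_pow n)) ?_)
    rw [degree_X_pow]
    exact_mod_cast not_lt.mp h

theorem eval_mem_subring (O : Subring R) {f : R[X]} (hf : ∀ i, f.coeff i ∈ O) {z : R}
    (hz : z ∈ O) : f.eval z ∈ O := by
  rw [eval_eq_sum]
  exact Subring.sum_mem O fun i _ => mul_mem (hf i) (pow_mem hz i)

end Ring

/-- `r` is `L(x)/x^(n-2)` for the part `L` of `f` of degree `< n - 1`; it is the value at `x⁻¹`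
of a polynomial with coefficients in `O`, obtained by reflecting `f %ₘ X ^ n`. -/
theorem exists_eval_eq_X_pow_mul_divByMonic_add {K : Type*} [Field K] (O : Subring K) {f : K[X]}
    (hf : ∀ i, f.coeff i ∈ O) {n : ℕ} (hn : n ≠ 0) {x : K} (hx : x ≠ 0) (hx' : x⁻¹ ∈ O) :
    ∃ r ∈ O, f.eval x = x ^ n * (f /ₘ X ^ n).eval x + x ^ (n - 1) * (f.coeff (n - 1) + x⁻¹ * r) := by
  let _ := invertibleOfNonzero hx
  set g := reflect (n - 1) (f %ₘ X ^ n)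
  have hdeg : (f %ₘ X ^ n).natDegree ≤ n - 1 := by
    rw [natDegree_le_iff_coeff_eq_zero]
    intro i hi
    rw [coeff_modByMonic_X_pow, if_neg (by omega)]
  have hg : ∀ i, g.coeff i ∈ O := by
    intro i
    rw [coeff_reflect, coeff_modByMonic_X_pow]
    split_ifs
    exacts [hf _, O.zero_mem]
  have hg0 : g.coeff 0 = f.coeff (n - 1) := by
    rw [coeff_reflect, revAt_le (Nat.zero_le _), Nat.sub_zero, coeff_modByMonic_X_pow,
      if_pos (by omega)]
  refine ⟨g.divX.eval x⁻¹, eval_mem_subring O (fun i => by rw [coeff_divX]; exact hg _) hx', ?_⟩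
  have hrefl : (f %ₘ X ^ n).eval x = g.eval x⁻¹ * x ^ (n - 1) := by
    rw [← invOf_eq_inv x]
    exact (eval₂_reflect_mul_pow (RingHom.id K) x (n - 1) (f %ₘ X ^ n) hdeg).symm
  rw [← divX_mul_X_add g, hg0] at hrefl
  simp only [eval_add, eval_mul, eval_X, eval_C] at hrefl
  conv_lhs => rw [← modByMonic_add_div f (X ^ n)]
  rw [eval_add, eval_mul, eval_pow, eval_X, hrefl]
  ring

theorem eval_X_pow_three_add_C_mul_X_add_C_pow_half {R : Type*} [CommRing R] {p : ℕ} (hp : Odd p)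
    {a₄ a₆ x y : R} (hcurve : y ^ 2 = x ^ 3 + a₄ * x + a₆) :
    ((X ^ 3 + C a₄ * X + C a₆) ^ ((p - 1) / 2)).eval x = y ^ (p - 1) := by
  obtain ⟨k, rfl⟩ := hp
  simp only [eval_pow, eval_add, eval_mul, eval_C, eval_X, ← hcurve, ← pow_mul]
  congr 1
  omega

end Polynomial

theorem mul_sub_wp_eq {F : Type*} [Field F] (p : ℕ) [Fact p.Prime] [CharP F p]
    {a₄ a₆ x y m A r : F} (h3 : (3 : F) ≠ 0) (hx : x ≠ 0) (hy : y ≠ 0)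
    (hcurve : y ^ 2 = x ^ 3 + a₄ * x + a₆)
    (hm : y ^ (p - 1) = x ^ p * m + x ^ (p - 1) * (A + x⁻¹ * r)) :
    let t := (3 * x ^ 2 + 2 * a₄) / (3 * y)
    let w := y / x ^ 2
    let c := (x / y) ^ 2 * (a₄ + 3 * a₆ * x⁻¹) * 3⁻¹
    y * m - (t ^ p - A * t) = w * (c * ((w * c) ^ (p - 1) - A) - r) := by
  intro t w c
  have hu : w * c = y / x - t := by
    simp only [w, c, t]
    field_simp
    linear_combination (-3) * hcurve
  have hym : y * m = (y / x) ^ p - A * (y / x) - w * r := by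
    obtain ⟨q, rfl⟩ : ∃ q, p = q + 1 := ⟨p - 1, by have := (Fact.out : p.Prime).pos; omega⟩
    rw [Nat.add_sub_cancel] at hm
    rw [div_pow, pow_succ y, hm]
    simp only [w]
    field_simp
    ring
  calc y * m - (t ^ p - A * t) = (y / x) ^ p - t ^ p - A * (y / x - t) - w * r := by
        rw [hym]; ring
    _ = (w * c) ^ (p - 1) * (w * c) - A * (w * c) - w * r := by
        rw [pow_sub_one_mul (Fact.out : p.Prime).ne_zero, hu, sub_pow_char]
    _ = w * (c * ((w * c) ^ (p - 1) - A) - r) := by ring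

/-- Let `p > 3` be a prime and `F` a field of characteristic `p` equipped with
a discrete valuation `v : F → ℤ ∪ {∞}`.  Let `a₄, a₆ ∈ F` with `v(a₄) ≥ 0` and `v(a₆) ≥ 0`,
let `ι ≥ 1` be an integer, and let `x, y ∈ F` satisfy `y² = x³ + a₄·x + a₆` with `v(x) = −2ι`
and `v(y) = −3ι`.  With `A`, `M` as in the Hasse invariant decomposition of
`(X³ + a₄X + a₆)^((p−1)/2)` evaluated at `a₄, a₆, x`, and `℘_A(z) = z^p − A·z`, one has
`v( y·M(x) − ℘_A((3x² + 2a₄)/(3y)) ) ≥ ι`. -/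
theorem stmt_4 (p : ℕ) (hp : p.Prime) (hp3 : 3 < p)
    (F : Type*) [Field F] [CharP F p]
    (v : F → WithTop ℤ)
    (hv0 : ∀ a, v a = ⊤ ↔ a = 0)
    (hvmul : ∀ a b, v (a * b) = v a + v b)
    (hvadd : ∀ a b, min (v a) (v b) ≤ v (a + b))
    (a₄ a₆ : F) (ha₄ : 0 ≤ v a₄) (ha₆ : 0 ≤ v a₆)
    (ι : ℤ) (hι : 1 ≤ ι)
    (x y : F) (hcurve : y ^ 2 = x ^ 3 + a₄ * x + a₆)
    (hvx : v x = ((-2 * ι : ℤ) : WithTop ℤ)) (hvy : v y = ((-3 * ι : ℤ) : WithTop ℤ)) :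
    let P : Polynomial F :=
      (Polynomial.X ^ 3 + Polynomial.C a₄ * Polynomial.X + Polynomial.C a₆) ^ ((p - 1) / 2)
    let A : F := P.coeff (p - 1)
    let M : Polynomial F := Polynomial.divByMonic P (Polynomial.X ^ p)
    let wA : F → F := fun z => z ^ p - A * z
    ((ι : ℤ) : WithTop ℤ) ≤ v (y * M.eval x - wA ((3 * x ^ 2 + 2 * a₄) / (3 * y))) := by
  intro P A M wA
  have := Fact.mk hp
  let ν : AddValuation F (WithTop ℤ) := AddValuation.of v ((hv0 0).2 rfl)
    (map_one_eq_zero_of_map_mul (by simp [hv0]) hvmul) hvadd hvmul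
  have hx : x ≠ 0 := by rw [Ne, ← hv0, hvx]; exact WithTop.coe_ne_top
  have hy : y ≠ 0 := by rw [Ne, ← hv0, hvy]; exact WithTop.coe_ne_top
  have h3 : (3 : F) ≠ 0 := by
    exact_mod_cast CharP.cast_ne_zero_of_ne_of_prime F Nat.prime_three (by omega)
  have hι0 : 0 ≤ ι := by omega
  have hxinv := ν.inv_mem_integer_of_map_eq hvx hι0
  have hw : y / x ^ 2 ∈ ν.integer := by
    rw [ν.mem_integer_iff, ν.map_div_sq_of_map_eq hvx hvy]; exact_mod_cast hι0
  have hc : (x / y) ^ 2 * (a₄ + 3 * a₆ * x⁻¹) * 3⁻¹ ∈ ν.integer :=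
    mul_mem (mul_mem (pow_mem (ν.div_mem_integer_of_map_eq hvx hvy hι0) 2)
      (add_mem ha₄ (mul_mem (mul_mem (ofNat_mem _ 3) ha₆) hxinv)))
      (by simpa using inv_natCast_mem_subring p ν.integer 3)
  have hP : ∀ i, P.coeff i ∈ ν.integer := Polynomial.coeff_pow_mem_subring _
    (Polynomial.coeff_X_pow_three_add_C_mul_X_add_C_mem _ ha₄ ha₆) _
  obtain ⟨r, hr, hPx⟩ := Polynomial.exists_eval_eq_X_pow_mul_divByMonic_add _ hP hp.ne_zero hx hxinv
  rw [Polynomial.eval_X_pow_three_add_C_mul_X_add_C_pow_half (hp.odd_of_ne_two (by omega))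
    hcurve] at hPx
  show (ι : WithTop ℤ) ≤ ν _
  rw [mul_sub_wp_eq p h3 hx hy hcurve hPx]
  exact ν.le_map_mul_of_mem_integer (ν.map_div_sq_of_map_eq hvx hvy).ge
    (sub_mem (mul_mem hc (sub_mem (pow_mem (mul_mem hw hc) _) (hP _))) hr)
end

section
/- Let s₂(u) = (u² − 6u + 3)/(u² − 3), s₃(u) = (−3u² + 6u − 9)/(u² − 3) in ℂ(u), and set t(u) = 2 − s₂(u)²/2. Then 6(u² − 3)² + 3(u² − 6u + 3)² = 9(u² − 2u + 3)² in ℤ[u]; consequently s₂(u)² = 2·1·(2 − t(u)) and s₃(u)² = 3·2·(3 − t(u)), so that P₂ = (2, s₂(u)) and P₃ = (3, s₃(u)) are both ℂ(u)-rational points of the Legendre elliptic curve y² = x(x−1)(x−t(u)). Moreover t(1) = 3/2. -/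
open Polynomial

lemma eval_div_aux (f : ℂ →+* ℂ) (a : ℂ) (p q : ℂ[X]) (hq : Polynomial.eval₂ f a q ≠ 0) :
    RatFunc.eval f a (algebraMap ℂ[X] (RatFunc ℂ) p / algebraMap ℂ[X] (RatFunc ℂ) q)
      = p.eval₂ f a / q.eval₂ f a := by
  have hq0 : q ≠ 0 := by rintro rfl; simp at hq
  set x : RatFunc ℂ := algebraMap ℂ[X] (RatFunc ℂ) p / algebraMap ℂ[X] (RatFunc ℂ) q with hx
  obtain ⟨c, hc⟩ : x.denom ∣ q := RatFunc.denom_div_dvd p q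
  have hd : Polynomial.eval₂ f a x.denom ≠ 0 := fun h => hq (by rw [hc, eval₂_mul, h, zero_mul])
  have hqq : (algebraMap ℂ[X] (RatFunc ℂ)) q ≠ 0 := by simpa using hq0
  have hdd : (algebraMap ℂ[X] (RatFunc ℂ)) x.denom ≠ 0 := by simpa using x.denom_ne_zero
  have key : x.num * q = p * x.denom := by
    apply IsFractionRing.injective ℂ[X] (RatFunc ℂ)
    rw [map_mul, map_mul, ← div_eq_div_iff hdd hqq, RatFunc.num_div_denom]
  have h2 := congrArg (Polynomial.eval₂ f a) key
  rw [eval₂_mul, eval₂_mul] at h2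
  rw [RatFunc.eval, div_eq_div_iff hd hq, h2]

/-- Let `s₂(u) = (u² − 6u + 3)/(u² − 3)`,
`s₃(u) = (−3u² + 6u − 9)/(u² − 3)` in `ℂ(u)`, and set `t(u) = 2 − s₂(u)²/2`.  Then
`6(u² − 3)² + 3(u² − 6u + 3)² = 9(u² − 2u + 3)²` in `ℤ[u]`; consequently
`s₂(u)² = 2·1·(2 − t(u))` and `s₃(u)² = 3·2·(3 − t(u))`, so that `P₂ = (2, s₂(u))` and
`P₃ = (3, s₃(u))` are both `ℂ(u)`-rational points of the Legendre elliptic curve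
`y² = x(x−1)(x−t(u))`.  Moreover `t(1) = 3/2`. -/
theorem stmt_8 :
    (6 * ((Polynomial.X : Polynomial ℤ) ^ 2 - 3) ^ 2
        + 3 * ((Polynomial.X : Polynomial ℤ) ^ 2 - 6 * Polynomial.X + 3) ^ 2
      = 9 * ((Polynomial.X : Polynomial ℤ) ^ 2 - 2 * Polynomial.X + 3) ^ 2) ∧
    (let u : RatFunc ℂ := RatFunc.X
     let s₂ : RatFunc ℂ := (u ^ 2 - 6 * u + 3) / (u ^ 2 - 3)
     let s₃ : RatFunc ℂ := (-3 * u ^ 2 + 6 * u - 9) / (u ^ 2 - 3)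
     let t : RatFunc ℂ := 2 - s₂ ^ 2 / 2
     -- the Legendre curve `y² = x(x−1)(x−t) = x³ − (1+t)x² + tx` in Weierstrass form
     let W : WeierstrassCurve.Affine (RatFunc ℂ) :=
       { a₁ := 0, a₂ := -(1 + t), a₃ := 0, a₄ := t, a₆ := 0 }
     (s₂ ^ 2 = 2 * 1 * (2 - t)) ∧ (s₃ ^ 2 = 3 * 2 * (3 - t)) ∧
     (s₂ ^ 2 = 2 * (2 - 1) * (2 - t)) ∧ (s₃ ^ 2 = 3 * (3 - 1) * (3 - t)) ∧
     W.Equation 2 s₂ ∧ W.Equation 3 s₃ ∧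
     RatFunc.eval (RingHom.id ℂ) 1 t = 3 / 2) := by
  constructor
  · ring
  intro u s₂ s₃ t W
  have hX : (RatFunc.X : RatFunc ℂ) = algebraMap ℂ[X] (RatFunc ℂ) X := rfl
  have hu : u = RatFunc.X := rfl
  have hs₂ : s₂ = (u ^ 2 - 6 * u + 3) / (u ^ 2 - 3) := rfl
  have hs₃ : s₃ = (-3 * u ^ 2 + 6 * u - 9) / (u ^ 2 - 3) := rfl
  have ht' : t = 2 - s₂ ^ 2 / 2 := rfl
  have hW : W = { a₁ := 0, a₂ := -(1 + t), a₃ := 0, a₄ := t, a₆ := 0 } := rfl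
  have hden : u ^ 2 - 3 ≠ 0 := by
    rw [hu]
    have : ((RatFunc.X : RatFunc ℂ) ^ 2 - 3) = algebraMap ℂ[X] (RatFunc ℂ) (X ^ 2 - 3) := by
      push_cast [map_sub, map_pow, map_ofNat, hX]
      ring
    rw [this]
    intro h
    have h0 : (X ^ 2 - 3 : ℂ[X]) = 0 :=
      IsFractionRing.injective ℂ[X] (RatFunc ℂ) (by simpa using h)
    have := congrArg (fun r => Polynomial.coeff r 2) h0
    norm_num [Polynomial.coeff_X_pow] at this
  clear_value u s₂ s₃ t W
  have h20 : (2 : RatFunc ℂ) ≠ 0 := by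
    intro h
    have h0 : (2 : ℂ[X]) = 0 :=
      IsFractionRing.injective ℂ[X] (RatFunc ℂ) (by rw [map_ofNat, map_zero]; exact h)
    norm_num at h0
  have hdpow : (u ^ 2 - 3) ^ 2 ≠ 0 := pow_ne_zero 2 hden
  have e2 : s₂ ^ 2 * (u ^ 2 - 3) ^ 2 = (u ^ 2 - 6 * u + 3) ^ 2 := by
    rw [hs₂, div_pow, div_mul_cancel₀ _ hdpow]
  have e3 : s₃ ^ 2 * (u ^ 2 - 3) ^ 2 = (-3 * u ^ 2 + 6 * u - 9) ^ 2 := by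
    rw [hs₃, div_pow, div_mul_cancel₀ _ hdpow]
  have hhalf : s₂ ^ 2 / 2 * 2 = s₂ ^ 2 := div_mul_cancel₀ _ h20
  have ht2 : 2 * t = 4 - s₂ ^ 2 := by
    rw [ht']
    linear_combination -hhalf
  have h2 : s₂ ^ 2 = 2 * 1 * (2 - t) := by linear_combination ht2
  have hs3sq : s₃ ^ 2 = 6 + 3 * s₂ ^ 2 := by
    apply mul_right_cancel₀ hdpow
    linear_combination e3 - 3 * e2
  have h3 : s₃ ^ 2 = 3 * 2 * (3 - t) := by linear_combination hs3sq + 3 * ht2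
  have he2 : W.Equation 2 s₂ := by
    rw [hW, WeierstrassCurve.Affine.equation_iff]
    show s₂ ^ 2 + 0 * 2 * s₂ + 0 * s₂ = 2 ^ 3 + -(1 + t) * 2 ^ 2 + t * 2 + 0
    linear_combination h2
  have he3 : W.Equation 3 s₃ := by
    rw [hW, WeierstrassCurve.Affine.equation_iff]
    show s₃ ^ 2 + 0 * 3 * s₃ + 0 * s₃ = 3 ^ 3 + -(1 + t) * 3 ^ 2 + t * 3 + 0
    linear_combination h3
  have ht : t = algebraMap ℂ[X] (RatFunc ℂ) (3 * X ^ 4 + 12 * X ^ 3 - 66 * X ^ 2 + 36 * X + 27)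
      / algebraMap ℂ[X] (RatFunc ℂ) (2 * (X ^ 2 - 3) ^ 2) := by
    have hP : algebraMap ℂ[X] (RatFunc ℂ) (3 * X ^ 4 + 12 * X ^ 3 - 66 * X ^ 2 + 36 * X + 27)
        = 3 * u ^ 4 + 12 * u ^ 3 - 66 * u ^ 2 + 36 * u + 27 := by
      rw [hu, hX]
      push_cast [map_add, map_sub, map_mul, map_pow, map_ofNat]
      ring
    have hQ : algebraMap ℂ[X] (RatFunc ℂ) (2 * (X ^ 2 - 3) ^ 2)
        = 2 * (u ^ 2 - 3) ^ 2 := by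
      rw [hu, hX]
      push_cast [map_add, map_sub, map_mul, map_pow, map_ofNat]
      ring
    rw [hP, hQ, eq_div_iff (mul_ne_zero h20 hdpow)]
    linear_combination (u ^ 2 - 3) ^ 2 * ht2 - e2
  have heval : RatFunc.eval (RingHom.id ℂ) 1 t = 3 / 2 := by
    rw [ht, eval_div_aux]
    · simp only [eval₂_add, eval₂_sub, eval₂_mul, eval₂_pow, eval₂_X, eval₂_ofNat,
        RingHom.id_apply]
      norm_num
    · simp only [eval₂_mul, eval₂_pow, eval₂_sub, eval₂_X, eval₂_ofNat]
      norm_num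
  exact ⟨h2, h3, by linear_combination h2, by linear_combination h3, he2, he3, heval⟩
end

section
/- Let p be a prime, and let K be a complete discretely valued field of characteristic p with normalized valuation v : K → ℤ ∪ {∞} and algebraically closed residue field. Let u, A, c ∈ K with v(u) = 0, v(A) = p − 1, and v(c) = ι where ι is an integer with ι ≥ p. Then there exists z ∈ K with u·z^p + A·z = c and v(z) = ι − p + 1. -/
/-!
Since `K` has characteristic `p`, the map `F z = u z^p + A z` is additive. Hence Newton's step
`z ↦ z + (c - F z) / A` replaces the residual `r = c - F z` by `-u (r / A)^p`, which raises
`v r = m` to `p (m - p + 1) > m` as soon as `m > p`. The iterates of an approximate solution with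
`v z₀ ≥ ι - p + 1` and `v (c - F z₀) > ι` therefore form a Cauchy sequence, whose limit solves
`F z = c`. An approximate solution is `z₀ = a t` with `v a = ι - p + 1` and `t` a root modulo
the maximal ideal of the integral polynomial `c⁻¹ F (a X) - 1`, whose linear coefficient is a
unit; it exists because the residue field is algebraically closed. Finally, `v z > ι - p + 1`
would force `v (F z) > ι = v c`.
-/

open Polynomial

lemma WithTop.one_le_of_pos {x : WithTop ℤ} (hx : 0 < x) : 1 ≤ x := by
  induction x with
  | top => exact le_top
  | coe k => exact_mod_cast (show (0 : ℤ) < k by exact_mod_cast hx)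

namespace AddValuation

variable {K : Type*} [Field K] (v : AddValuation K (WithTop ℤ))

def IsCauchyComplete : Prop :=
  ∀ f : ℕ → K, (∀ m : ℤ, ∃ N : ℕ, ∀ i ≥ N, ∀ j ≥ N, (m : WithTop ℤ) ≤ v (f i - f j)) →
    ∃ L : K, ∀ m : ℤ, ∃ N : ℕ, ∀ i ≥ N, (m : WithTop ℤ) ≤ v (f i - L)

def HasAlgClosedResidueField : Prop :=
  ∀ f : K[X], 0 < f.natDegree → (∀ i, 0 ≤ v (f.coeff i)) → v f.leadingCoeff = 0 →
    ∃ a : K, 0 ≤ v a ∧ 0 < v (f.eval a)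

variable {v}

lemma coe_add_le_map_mul {a b : K} {m n : ℤ} (ha : (m : WithTop ℤ) ≤ v a)
    (hb : (n : WithTop ℤ) ≤ v b) : ((m + n : ℤ) : WithTop ℤ) ≤ v (a * b) := by
  rw [map_mul, WithTop.coe_add]
  exact add_le_add ha hb

lemma coe_mul_le_map_pow {a : K} {m : ℤ} (ha : (m : WithTop ℤ) ≤ v a) (n : ℕ) :
    ((n * m : ℤ) : WithTop ℤ) ≤ v (a ^ n) := by
  rw [map_pow, ← nsmul_eq_mul, WithTop.coe_nsmul]
  exact nsmul_le_nsmul_right ha n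

lemma map_inv_of_map_eq_coe {a : K} {k : ℤ} (ha : v a = k) :
    v a⁻¹ = ((-k : ℤ) : WithTop ℤ) := by
  rw [map_inv, ha, WithTop.LinearOrderedAddCommGroup.coe_neg]

lemma coe_sub_le_map_div {a b : K} {m k : ℤ} (ha : (m : WithTop ℤ) ≤ v a) (hb : v b = k) :
    ((m - k : ℤ) : WithTop ℤ) ≤ v (a / b) := by
  rw [div_eq_mul_inv, sub_eq_add_neg]
  exact coe_add_le_map_mul ha (map_inv_of_map_eq_coe hb).ge

lemma eq_zero_of_forall_coe_le_map {a : K} (h : ∀ m : ℤ, (m : WithTop ℤ) ≤ v a) : a = 0 :=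
  v.top_iff.mp (WithTop.eq_top_iff_forall_ge.mpr h)

lemma coe_add_le_map_sub_of_le_map_succ_sub {z : ℕ → K} {a : ℤ}
    (h : ∀ n : ℕ, ((a + n : ℤ) : WithTop ℤ) ≤ v (z (n + 1) - z n)) (i k : ℕ) :
    ((a + i : ℤ) : WithTop ℤ) ≤ v (z (i + k) - z i) := by
  induction k with
  | zero => simp
  | succ k ih =>
    rw [← add_assoc, ← sub_add_sub_cancel _ (z (i + k))]
    refine v.map_le_add (le_trans ?_ (h (i + k))) ih
    exact_mod_cast (by omega : a + i ≤ a + (i + k : ℕ))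

theorem IsCauchyComplete.exists_limit (hK : v.IsCauchyComplete) {z : ℕ → K} {a : ℤ}
    (h : ∀ n : ℕ, ((a + n : ℤ) : WithTop ℤ) ≤ v (z (n + 1) - z n)) :
    ∃ L : K, ∀ n : ℕ, ((a + n : ℤ) : WithTop ℤ) ≤ v (L - z n) := by
  have tail := coe_add_le_map_sub_of_le_map_succ_sub h
  obtain ⟨L, hL⟩ := hK z fun m ↦ ⟨(m - a).toNat, fun i hi j hj ↦ by
    obtain ⟨k, rfl⟩ := Nat.exists_eq_add_of_le hi
    obtain ⟨l, rfl⟩ := Nat.exists_eq_add_of_le hj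
    rw [← sub_sub_sub_cancel_right _ _ (z (m - a).toNat)]
    refine v.map_le_sub (le_trans ?_ (tail _ k)) (le_trans ?_ (tail _ l)) <;>
      exact_mod_cast (by omega : m ≤ a + (m - a).toNat)⟩
  refine ⟨L, fun n ↦ ?_⟩
  obtain ⟨N, hN⟩ := hL (a + n)
  obtain ⟨k, hk⟩ := Nat.exists_eq_add_of_le (le_max_right N n)
  rw [← sub_sub_sub_cancel_left (z n) L (z (n + k)), ← hk]
  exact v.map_le_sub (by rw [hk]; exact tail n k) (hN _ (le_max_left N n))

lemma le_map_coeff_trinomial {k m n : ℕ} {a b c : K} (ha : 0 ≤ v a) (hb : 0 ≤ v b)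
    (hc : 0 ≤ v c) (i : ℕ) : 0 ≤ v ((trinomial k m n a b c).coeff i) := by
  simp only [trinomial_def, coeff_add, coeff_C_mul_X_pow]
  refine v.map_le_add (v.map_le_add ?_ ?_) ?_ <;> split_ifs <;> simp [*]

theorem HasAlgClosedResidueField.exists_approx_root (hK : v.HasAlgClosedResidueField) {p : ℕ}
    (hp : 2 ≤ p) {α β : K} (hα : 0 ≤ v α) (hβ : v β = 0) :
    ∃ t : K, 0 ≤ v t ∧ 0 < v (α * t ^ p + β * t - 1) := by
  have hβ0 : β ≠ 0 := by simp [← v.ne_top_iff, hβ]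
  rcases hα.lt_or_eq with hα | hα
  · -- `α` vanishes in the residue field, leaving the linear equation `β t = 1`
    refine ⟨β⁻¹, by simp [map_inv, hβ], ?_⟩
    rwa [mul_inv_cancel₀ hβ0, add_sub_cancel_right, map_mul, map_pow, map_inv, hβ, neg_zero,
      smul_zero, add_zero]
  · have hα0 : α ≠ 0 := by simp [← v.ne_top_iff, ← hα]
    obtain ⟨t, ht, hroot⟩ := hK (trinomial 0 1 p (-1) β α)
      (by rw [trinomial_natDegree one_pos hp hα0]; omega)
      (le_map_coeff_trinomial (by simp) hβ.ge hα.le)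
      (by rw [trinomial_leadingCoeff one_pos hp hα0, hα])
    refine ⟨t, ht, ?_⟩
    simpa [trinomial_def, sub_eq_neg_add, add_comm, add_left_comm] using hroot

end AddValuation

section LeadingVerschiebung

variable {K : Type*} [Field K] (p : ℕ) [Fact p.Prime] [CharP K p]

/-- The leading terms `u z^p + A z` of the Verschiebung `V(z)`; additive because `K` has
characteristic `p`. -/
def leadingVerschiebung (u A : K) : K →+ K where
  toFun z := u * z ^ p + A * z
  map_zero' := by simp [(Fact.out : p.Prime).ne_zero]
  map_add' x y := by simp only [add_pow_char]; ring

variable {p}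

@[simp]
lemma leadingVerschiebung_apply (u A z : K) :
    leadingVerschiebung p u A z = u * z ^ p + A * z :=
  rfl

lemma sub_leadingVerschiebung_add_div {A : K} (hA : A ≠ 0) (u c z : K) :
    c - leadingVerschiebung p u A (z + (c - leadingVerschiebung p u A z) / A) =
      -(u * ((c - leadingVerschiebung p u A z) / A) ^ p) := by
  rw [map_add, leadingVerschiebung_apply _ _ ((c - _) / A)]
  field_simp
  ring

variable {v : AddValuation K (WithTop ℤ)} {u A : K}

lemma coe_min_le_map_leadingVerschiebung (hu : 0 ≤ v u)
    (hA : (((p : ℤ) - 1 : ℤ) : WithTop ℤ) ≤ v A) {z : K} {m : ℤ} (hz : (m : WithTop ℤ) ≤ v z) :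
    ((min (p * m) (p - 1 + m) : ℤ) : WithTop ℤ) ≤ v (leadingVerschiebung p u A z) := by
  refine v.map_le_add
    (le_trans ?_ (AddValuation.coe_add_le_map_mul hu (AddValuation.coe_mul_le_map_pow hz p)))
    (le_trans ?_ (AddValuation.coe_add_le_map_mul hA hz))
  all_goals exact_mod_cast (by omega)

lemma coe_add_one_le_map_sub_leadingVerschiebung_newton (hu : 0 ≤ v u)
    (hA : v A = ((p : ℤ) - 1 : ℤ)) {c z : K} {m : ℤ} (hm : (p : ℤ) + 1 ≤ m)
    (hr : (m : WithTop ℤ) ≤ v (c - leadingVerschiebung p u A z)) :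
    ((m + 1 : ℤ) : WithTop ℤ) ≤
      v (c - leadingVerschiebung p u A (z + (c - leadingVerschiebung p u A z) / A)) := by
  have hA0 : A ≠ 0 := by simp [← v.ne_top_iff, hA]
  have hp : (2 : ℤ) ≤ p := by exact_mod_cast (Fact.out : p.Prime).two_le
  rw [sub_leadingVerschiebung_add_div hA0, v.map_neg]
  refine le_trans (WithTop.coe_le_coe.mpr ?_) (AddValuation.coe_add_le_map_mul hu
    (AddValuation.coe_mul_le_map_pow (AddValuation.coe_sub_le_map_div hr hA) p))
  nlinarith

theorem exists_leadingVerschiebung_eq_of_approx (hK : v.IsCauchyComplete) (hu : 0 ≤ v u)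
    (hA : v A = ((p : ℤ) - 1 : ℤ)) {c z₀ : K} {ι : ℤ} (hι : (p : ℤ) ≤ ι)
    (hz₀ : ((ι - p + 1 : ℤ) : WithTop ℤ) ≤ v z₀)
    (hr₀ : ((ι + 1 : ℤ) : WithTop ℤ) ≤ v (c - leadingVerschiebung p u A z₀)) :
    ∃ z, leadingVerschiebung p u A z = c ∧ ((ι - p + 1 : ℤ) : WithTop ℤ) ≤ v z := by
  set F := leadingVerschiebung p u A
  set z : ℕ → K := fun n ↦ (fun y ↦ y + (c - F y) / A)^[n] z₀
  have hz : ∀ n, z (n + 1) = z n + (c - F (z n)) / A := fun n ↦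
    Function.iterate_succ_apply' _ n z₀
  have hr : ∀ n : ℕ, ((ι + 1 + n : ℤ) : WithTop ℤ) ≤ v (c - F (z n)) := by
    intro n
    induction n with
    | zero => simpa [z] using hr₀
    | succ n ih =>
      rw [hz, Nat.cast_succ, ← add_assoc]
      exact coe_add_one_le_map_sub_leadingVerschiebung_newton hu hA (by omega) ih
  have hstep : ∀ n : ℕ, ((ι - p + 2 + n : ℤ) : WithTop ℤ) ≤ v (z (n + 1) - z n) := by
    intro n
    rw [hz, add_sub_cancel_left]
    convert AddValuation.coe_sub_le_map_div (hr n) hA using 2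
    ring
  obtain ⟨L, hL⟩ := hK.exists_limit hstep
  refine ⟨L, ?_, ?_⟩
  · rw [← sub_eq_zero, ← neg_sub, neg_eq_zero]
    refine AddValuation.eq_zero_of_forall_coe_le_map (v := v) fun m ↦ ?_
    set n := (m - ι + p).toNat
    have hn : m - ι + p ≤ n := Int.self_le_toNat _
    have hsplit : c - F L = (c - F (z n)) - F (L - z n) := by rw [map_sub]; ring
    rw [hsplit]
    refine v.map_le_sub (le_trans ?_ (hr n))
      (le_trans ?_ (coe_min_le_map_leadingVerschiebung hu hA.ge (hL n)))
    · exact_mod_cast (by omega : m ≤ ι + 1 + n)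
    · have : ι - p + 2 + n ≤ p * (ι - p + 2 + n) :=
        le_mul_of_one_le_left (by omega) (by exact_mod_cast (Fact.out : p.Prime).one_lt.le)
      exact_mod_cast (by omega : m ≤ min (p * (ι - p + 2 + n)) (p - 1 + (ι - p + 2 + n)))
  · rw [← add_sub_cancel z₀ L]
    refine v.map_le_add hz₀ (le_trans ?_ (hL 0))
    exact_mod_cast (by omega : ι - p + 1 ≤ ι - p + 2 + (0 : ℕ))

theorem map_eq_of_leadingVerschiebung_eq (hu : 0 ≤ v u)
    (hA : (((p : ℤ) - 1 : ℤ) : WithTop ℤ) ≤ v A) {c z : K} {ι : ℤ} (hι : (p : ℤ) ≤ ι)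
    (hc : v c = ι) (hz : ((ι - p + 1 : ℤ) : WithTop ℤ) ≤ v z)
    (hFz : leadingVerschiebung p u A z = c) : v z = ((ι - p + 1 : ℤ) : WithTop ℤ) := by
  have hz0 : z ≠ 0 := by
    rintro rfl
    rw [← hFz, map_zero, v.map_zero] at hc
    exact WithTop.top_ne_coe hc
  obtain ⟨k, hk⟩ := WithTop.ne_top_iff_exists.mp (v.ne_top_iff.mpr hz0)
  have hbound := coe_min_le_map_leadingVerschiebung hu hA hk.le
  rw [hFz, hc, WithTop.coe_le_coe] at hbound
  rw [← hk, WithTop.coe_le_coe] at hz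
  rw [← hk, WithTop.coe_inj]
  by_contra hne
  have : p * (ι - p + 2) ≤ p * k := by gcongr; omega
  have hp : (2 : ℤ) ≤ p := by exact_mod_cast (Fact.out : p.Prime).two_le
  have : ι + 1 ≤ p * (ι - p + 2) := by nlinarith
  omega

theorem exists_approx_leadingVerschiebung_eq (hK : v.HasAlgClosedResidueField)
    (hsurj : ∀ n : ℤ, ∃ a : K, v a = n) (hu : 0 ≤ v u) (hA : v A = ((p : ℤ) - 1 : ℤ)) {c : K}
    {ι : ℤ} (hι : (p : ℤ) ≤ ι) (hc : v c = ι) :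
    ∃ z₀ : K, ((ι - p + 1 : ℤ) : WithTop ℤ) ≤ v z₀ ∧
      ((ι + 1 : ℤ) : WithTop ℤ) ≤ v (c - leadingVerschiebung p u A z₀) := by
  have hp : 2 ≤ p := (Fact.out : p.Prime).two_le
  have hc0 : c ≠ 0 := by simp [← v.ne_top_iff, hc]
  obtain ⟨a, ha⟩ := hsurj (ι - p + 1)
  have hα : 0 ≤ v (u * a ^ p / c) := by
    refine le_trans (WithTop.coe_le_coe.mpr ?_) (AddValuation.coe_sub_le_map_div
      (AddValuation.coe_add_le_map_mul hu (AddValuation.coe_mul_le_map_pow ha.ge p)) hc)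
    have hp' : (2 : ℤ) ≤ p := by exact_mod_cast hp
    nlinarith
  have hβ : v (A * a / c) = 0 := by
    rw [AddValuation.map_div, AddValuation.map_mul, hA, ha, hc, ← WithTop.coe_add,
      ← WithTop.LinearOrderedAddCommGroup.coe_sub, ← WithTop.coe_zero, WithTop.coe_inj]
    ring
  obtain ⟨t, ht, hroot⟩ := hK.exists_approx_root hp hα hβ
  refine ⟨a * t, by simpa using AddValuation.coe_add_le_map_mul ha.ge ht, ?_⟩
  have hres : c - leadingVerschiebung p u A (a * t) =
      -(c * (u * a ^ p / c * t ^ p + A * a / c * t - 1)) := by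
    simp only [leadingVerschiebung_apply]
    field_simp
    ring
  rw [hres, v.map_neg]
  exact AddValuation.coe_add_le_map_mul hc.ge (WithTop.one_le_of_pos hroot)

end LeadingVerschiebung

/-- Let `p` be a prime, and let `K` be a complete discretely valued field of
characteristic `p` with normalized valuation `v : K → ℤ ∪ {∞}` and algebraically closed
residue field.  Let `u, A, c ∈ K` with `v(u) = 0`, `v(A) = p − 1`, and `v(c) = ι` where `ι`
is an integer with `ι ≥ p`.  Then there exists `z ∈ K` with `u·z^p + A·z = c` and
`v(z) = ι − p + 1`.

Here the valuation is encoded by its axioms, completeness by the convergence of Cauchy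
sequences, and algebraic closedness of the residue field by the solvability modulo the
maximal ideal of every polynomial with integral coefficients, unit leading coefficient and
positive degree. -/
theorem stmt_11 (p : ℕ) (hp : p.Prime) (K : Type*) [Field K] [CharP K p]
    (v : K → WithTop ℤ)
    (hv0 : ∀ a, v a = ⊤ ↔ a = 0)
    (hvmul : ∀ a b, v (a * b) = v a + v b)
    (hvadd : ∀ a b, min (v a) (v b) ≤ v (a + b))
    -- `v` is normalized, i.e. surjective onto `ℤ`
    (hvsurj : ∀ n : ℤ, ∃ a : K, v a = (n : WithTop ℤ))
    -- `K` is complete: every Cauchy sequence converges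
    (hcomplete : ∀ f : ℕ → K,
      (∀ m : ℤ, ∃ N : ℕ, ∀ i ≥ N, ∀ j ≥ N, ((m : ℤ) : WithTop ℤ) ≤ v (f i - f j)) →
      ∃ L : K, ∀ m : ℤ, ∃ N : ℕ, ∀ i ≥ N, ((m : ℤ) : WithTop ℤ) ≤ v (f i - L))
    -- the residue field of `v` is algebraically closed
    (hres : ∀ f : Polynomial K, 0 < f.natDegree →
      (∀ i, 0 ≤ v (f.coeff i)) → v f.leadingCoeff = 0 →
      ∃ a : K, 0 ≤ v a ∧ 0 < v (Polynomial.eval a f))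
    (u A c : K) (ι : ℤ) (hι : (p : ℤ) ≤ ι)
    (hu : v u = (0 : ℤ)) (hA : v A = ((p : ℤ) - 1 : ℤ)) (hc : v c = (ι : WithTop ℤ)) :
    ∃ z : K, u * z ^ p + A * z = c ∧ v z = ((ι - p + 1 : ℤ) : WithTop ℤ) := by
  have := Fact.mk hp
  have hv1 : v 1 = 0 := by
    have h := hvmul 1 1
    rw [one_mul] at h
    exact (WithTop.add_left_cancel (by simp [hv0]) ((add_zero _).trans h)).symm
  let w := AddValuation.of v ((hv0 0).mpr rfl) hv1 hvadd hvmul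
  obtain ⟨z₀, hz₀, hr₀⟩ := exists_approx_leadingVerschiebung_eq (v := w) hres hvsurj hu.ge hA hι hc
  obtain ⟨z, hz, hvz⟩ :=
    exists_leadingVerschiebung_eq_of_approx (v := w) hcomplete hu.ge hA hι hz₀ hr₀
  exact ⟨z, hz, map_eq_of_leadingVerschiebung_eq (v := w) hu.ge hA.ge hι hc hvz hz⟩
end
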